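/- arXiv:2010.03024 — 6 statements merged into one kernel-verified Lean document; each statement's English description precedes it below -/
import Mathlib

section
/- If F : 2^X → ℝ is non-negative, monotone, and submodular on a finite ground set X, and A^G is the set of size k produced by greedy maximization (iteratively adding the element with the largest marginal gain), then F(A^G) ≥ (1 - 1/e) · max over subsets A of size at most k of F(A). -/
/-!
Let `OPT = F B` for a set `B` of size at most `k`. At any set `A`, submodularity bounds the gain
`F (A ∪ B) - F A` by the sum of the `≤ k` single-element gains of `B \ A`, so the greedy element
gains at least `(OPT - F A) / k`. Hence the gap `OPT - F (A_m)` shrinks by a factor `1 - 1/k` per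
step, and after `k` steps it is at most `(1 - 1/k)^k · OPT ≤ e⁻¹ · OPT`.
-/

section

open Finset

variable {α : Type*} [DecidableEq α]

def marginalGain (F : Finset α → ℝ) (A : Finset α) (i : α) : ℝ :=
  F (insert i A) - F A

def IsSubmodular (F : Finset α → ℝ) : Prop :=
  ∀ (A B : Finset α) (i : α), A ⊆ B → i ∉ B → marginalGain F B i ≤ marginalGain F A i

variable {F : Finset α → ℝ}

lemma marginalGain_nonneg (hmono : Monotone F) (A : Finset α) (i : α) :
    0 ≤ marginalGain F A i :=
  sub_nonneg.2 (hmono (subset_insert i A))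

lemma sub_le_sum_marginalGain (hmono : Monotone F) (hsub : IsSubmodular F) (A S : Finset α) :
    F (A ∪ S) - F A ≤ ∑ i ∈ S, marginalGain F A i := by
  induction S using Finset.induction with
  | empty => simp
  | @insert j T hjT ih =>
    have hstep : F (A ∪ insert j T) - F (A ∪ T) ≤ marginalGain F A j := by
      rw [union_insert]
      by_cases hj : j ∈ A ∪ T
      · rw [insert_eq_of_mem hj, sub_self]
        exact marginalGain_nonneg hmono A j
      · exact hsub A (A ∪ T) j subset_union_left hj
    rw [sum_insert hjT]
    linarith

lemma le_add_card_sdiff_mul (hmono : Monotone F) (hsub : IsSubmodular F) {A : Finset α} {g : ℝ}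
    (hg : ∀ j ∉ A, marginalGain F A j ≤ g) (B : Finset α) :
    F B ≤ F A + #(B \ A) * g := by
  have hsum : ∑ j ∈ B \ A, marginalGain F A j ≤ #(B \ A) * g := by
    simpa only [nsmul_eq_mul] using sum_le_card_nsmul _ _ g fun j hj => hg j (mem_sdiff.1 hj).2
  calc F B ≤ F (A ∪ (B \ A)) := hmono (by simp)
    _ ≤ F A + ∑ j ∈ B \ A, marginalGain F A j := by
      linarith [sub_le_sum_marginalGain hmono hsub A (B \ A)]
    _ ≤ F A + #(B \ A) * g := by linarith

lemma sub_insert_le_mul_sub_of_forall_le (hmono : Monotone F) (hsub : IsSubmodular F) {k : ℕ}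
    (hk : 0 < k) {A B : Finset α} (hB : #B ≤ k) {i : α}
    (hi : ∀ j ∉ A, marginalGain F A j ≤ marginalGain F A i) :
    F B - F (insert i A) ≤ (1 - 1 / k) * (F B - F A) := by
  have hgain := marginalGain_nonneg hmono A i
  have hcard : (#(B \ A) : ℝ) ≤ k := by exact_mod_cast (card_le_card sdiff_subset).trans hB
  have hgap : F B - F A ≤ k * marginalGain F A i := by
    linarith [le_add_card_sdiff_mul hmono hsub hi B, mul_le_mul_of_nonneg_right hcard hgain]
  have hshare : (F B - F A) / k ≤ marginalGain F A i := by
    rwa [div_le_iff₀' (by exact_mod_cast hk)]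
  have hexpand : (1 - 1 / k) * (F B - F A) = F B - F A - (F B - F A) / k := by ring
  unfold marginalGain at hshare
  linarith

lemma sub_le_pow_mul_sub_of_greedy (hmono : Monotone F) (hsub : IsSubmodular F) {k : ℕ}
    (hk : 0 < k) {B : Finset α} (hB : #B ≤ k) (AG : ℕ → Finset α)
    (hstep : ∀ m < k, ∃ i, AG (m + 1) = insert i (AG m) ∧
      ∀ j ∉ AG m, marginalGain F (AG m) j ≤ marginalGain F (AG m) i) :
    ∀ m ≤ k, F B - F (AG m) ≤ (1 - 1 / k) ^ m * (F B - F (AG 0)) := by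
  intro m hm
  induction m with
  | zero => simp
  | succ m ih =>
    obtain ⟨i, hAG, hi⟩ := hstep m hm
    calc F B - F (AG (m + 1)) ≤ (1 - 1 / k) * (F B - F (AG m)) := by
          rw [hAG]; exact sub_insert_le_mul_sub_of_forall_le hmono hsub hk hB hi
      _ ≤ (1 - 1 / k) * ((1 - 1 / k) ^ m * (F B - F (AG 0))) :=
          mul_le_mul_of_nonneg_left (ih (by omega)) (Nat.one_sub_one_div_cast_nonneg k)
      _ = (1 - 1 / k) ^ (m + 1) * (F B - F (AG 0)) := by ring

end

theorem greedy_max_guarantee_general {α : Type*} [DecidableEq α]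
    (F : Finset α → ℝ)
    (hnn : ∀ A : Finset α, 0 ≤ F A)
    (hmono : ∀ A B : Finset α, A ⊆ B → F A ≤ F B)
    (hsub : ∀ (A B : Finset α) (i : α), A ⊆ B → i ∉ B →
      F (insert i B) - F B ≤ F (insert i A) - F A)
    (k : ℕ) (AG : ℕ → Finset α)
    (hstep : ∀ m < k, ∃ i ∉ AG m, AG (m + 1) = insert i (AG m) ∧
      ∀ j ∉ AG m, F (insert j (AG m)) - F (AG m) ≤ F (insert i (AG m)) - F (AG m))
    (Astar : Finset α) (hA : Astar.card ≤ k) :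
    (1 - Real.exp (-1)) * F Astar ≤ F (AG k) := by
  have hF : Monotone F := fun A B => hmono A B
  rcases k.eq_zero_or_pos with rfl | hk
  · rw [Finset.card_eq_zero.1 (Nat.le_zero.1 hA)]
    linarith [hF (Finset.empty_subset (AG 0)), mul_nonneg (Real.exp_pos (-1)).le (hnn ∅)]
  · have hgap := sub_le_pow_mul_sub_of_greedy hF hsub hk hA AG
      (fun m hm => (hstep m hm).imp fun _ h => h.2) k le_rfl
    have hexp : (1 - 1 / k : ℝ) ^ k ≤ Real.exp (-1) :=
      Real.one_sub_div_pow_le_exp_neg (by exact_mod_cast hk)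
    have hpow : (0 : ℝ) ≤ (1 - 1 / k) ^ k := pow_nonneg (Nat.one_sub_one_div_cast_nonneg k) k
    linarith [mul_nonneg hpow (hnn (AG 0)), mul_le_mul_of_nonneg_right hexp (hnn Astar)]

/-- Greedy maximization of a non-negative monotone submodular function achieves
a `(1 - 1/e)` approximation of the best set of size at most `k`. -/
theorem greedy_max_guarantee {α : Type*} [Fintype α] [DecidableEq α]
    (F : Finset α → ℝ)
    (hnn : ∀ A : Finset α, 0 ≤ F A)
    (hmono : ∀ A B : Finset α, A ⊆ B → F A ≤ F B)
    (hsub : ∀ (A B : Finset α) (i : α), A ⊆ B → i ∉ B →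
      F (insert i B) - F B ≤ F (insert i A) - F A)
    (k : ℕ) (AG : ℕ → Finset α)
    (h0 : AG 0 = ∅)
    (hstep : ∀ m < k, ∃ i ∉ AG m, AG (m + 1) = insert i (AG m) ∧
      ∀ j ∉ AG m, F (insert j (AG m)) - F (AG m) ≤ F (insert i (AG m)) - F (AG m))
    (Astar : Finset α) (hA : Astar.card ≤ k)
    (hopt : ∀ B : Finset α, B.card ≤ k → F B ≤ F Astar) :
    (1 - Real.exp (-1)) * F Astar ≤ F (AG k) :=
  greedy_max_guarantee_general F hnn hmono hsub k AG hstep Astar hA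
end

section
/- If F : 2^X → ℝ≥0 is monotone and submodular, the greedy partial solutions A_0 ⊆ A_1 ⊆ ... ⊆ A_k satisfy for every m < k: F(A_{m+1}) - F(A_m) ≥ (1/k)(F(A*) - F(A_m)), where A* is any set of size at most k. -/
lemma union_marginal_le_sum {α : Type*} [DecidableEq α]
    (F : Finset α → ℝ)
    (hmono : ∀ A B : Finset α, A ⊆ B → F A ≤ F B)
    (hsub : ∀ (A B : Finset α) (i : α), A ⊆ B → i ∉ B →
      F (insert i B) - F B ≤ F (insert i A) - F A)
    (A : Finset α) (S : Finset α) :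
    F (A ∪ S) - F A ≤ ∑ j ∈ S, (F (insert j A) - F A) := by
  induction S using Finset.induction_on with
  | empty => simp
  | @insert x s hx ih =>
    rw [Finset.sum_insert hx]
    have h1 : A ∪ insert x s = insert x (A ∪ s) := by
      ext y; simp [or_assoc, or_comm, or_left_comm]
    rw [h1]
    by_cases hxm : x ∈ A ∪ s
    · rw [Finset.insert_eq_self.mpr hxm]
      have h2 : 0 ≤ F (insert x A) - F A :=
        sub_nonneg.mpr (hmono _ _ (Finset.subset_insert _ _))
      linarith [ih]
    · have h3 : F (insert x (A ∪ s)) - F (A ∪ s) ≤ F (insert x A) - F A :=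
        hsub A (A ∪ s) x Finset.subset_union_left hxm
      linarith [ih]

/-- Per-iteration greedy inequality: the greedy step of greedy maximization closes at
least a `1/k` fraction of the gap to the optimum `A*` of size at most `k`. -/
theorem greedy_per_iteration {α : Type*} [Fintype α] [DecidableEq α]
    (F : Finset α → ℝ)
    (hnn : ∀ A : Finset α, 0 ≤ F A)
    (hmono : ∀ A B : Finset α, A ⊆ B → F A ≤ F B)
    (hsub : ∀ (A B : Finset α) (i : α), A ⊆ B → i ∉ B →
      F (insert i B) - F B ≤ F (insert i A) - F A)
    (k : ℕ) (hk : 0 < k)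
    (A : Finset α) (Astar : Finset α) (hA : Astar.card ≤ k)
    (i : α) (hi : i ∉ A)
    (hmax : ∀ j ∉ A, F (insert j A) - F A ≤ F (insert i A) - F A) :
    (1 / (k : ℝ)) * (F Astar - F A) ≤ F (insert i A) - F A := by
  set g : ℝ := F (insert i A) - F A with hg
  have hg0 : 0 ≤ g := sub_nonneg.mpr (hmono _ _ (Finset.subset_insert _ _))
  have h1 : F Astar ≤ F (A ∪ Astar) := hmono _ _ Finset.subset_union_right
  have h2 := union_marginal_le_sum F hmono hsub A Astar
  have h3 : ∑ j ∈ Astar, (F (insert j A) - F A) ≤ Astar.card * g := by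
    calc ∑ j ∈ Astar, (F (insert j A) - F A) ≤ ∑ j ∈ Astar, g := by
          apply Finset.sum_le_sum
          intro j _
          by_cases hj : j ∈ A
          · rw [Finset.insert_eq_self.mpr hj]; simpa using hg0
          · exact hmax j hj
      _ = Astar.card * g := by rw [Finset.sum_const, nsmul_eq_mul]
  have h4 : (Astar.card : ℝ) * g ≤ k * g :=
    mul_le_mul_of_nonneg_right (by exact_mod_cast hA) hg0
  have hkpos : (0:ℝ) < k := by exact_mod_cast hk
  rw [div_mul_eq_mul_div, one_mul, div_le_iff₀ hkpos]
  nlinarith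
end

section
/- Let A* maximize a set function F over a finite collection {A_1,...,A_v}, and let A' be the maximizer of F over a sample R of r sets drawn i.i.d. with Pr(A) = F(A)/c for a constant c with c/F(A*) - 1 ≤ r. Then F(A*) - E[F(A')] ≤ (r/(r+1))^r · F(A*). -/
/-!
Let `p* = F(A*)/c`. Pointwise, `F(A*) - F(A')` is nonpositive when `A*` is among the samples and
at most `F(A*)` otherwise, so the gap `F(A*) - E[F(A')]` is at most `F(A*)` times the probability
`(1 - p*)^r` that `A*` is never drawn. The assumption on `r` says exactly `p* ≥ 1/(r+1)`.
-/

open Finset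

section

variable {ι : Type*} [Fintype ι] [DecidableEq ι]

theorem sum_prod_filter_forall_ne_eq_pow {p : ι → ℝ} (hp : ∑ j, p j = 1) (i : ι) (r : ℕ) :
    ∑ ω : Fin r → ι with ∀ l, ω l ≠ i, ∏ l, p (ω l) = (1 - p i) ^ r := by
  have hfilter : ({ω : Fin r → ι | ∀ l, ω l ≠ i} : Finset _) =
      Fintype.piFinset fun _ => univ.erase i := by
    ext ω
    simp [Fintype.mem_piFinset]
  rw [hfilter, ← sum_pow', sum_erase_eq_sub (mem_univ i), hp]

theorem sub_sum_prod_mul_sup'_le {p : ι → ℝ} (hp0 : ∀ j, 0 ≤ p j) (hp : ∑ j, p j = 1)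
    {F : ι → ℝ} (hF : ∀ j, 0 ≤ F j) (i : ι) {r : ℕ} (hr : (univ : Finset (Fin r)).Nonempty) :
    F i - ∑ ω : Fin r → ι, (∏ l, p (ω l)) * univ.sup' hr (fun l => F (ω l))
      ≤ (1 - p i) ^ r * F i := by
  have htotal : ∑ ω : Fin r → ι, ∏ l, p (ω l) = 1 := by rw [← Fintype.sum_pow, hp, one_pow]
  have hgap : ∀ ω : Fin r → ι,
      F i - univ.sup' hr (fun l => F (ω l)) ≤ if ∀ l, ω l ≠ i then F i else 0 := by
    intro ω
    split_ifs with hmiss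
    · obtain ⟨l, hl⟩ := hr
      linarith [(hF (ω l)).trans (le_sup' (fun l => F (ω l)) hl)]
    · obtain ⟨l, rfl⟩ := not_forall_not.1 hmiss
      exact sub_nonpos.2 (le_sup' (fun l => F (ω l)) (mem_univ l))
  calc F i - ∑ ω : Fin r → ι, (∏ l, p (ω l)) * univ.sup' hr (fun l => F (ω l))
      = ∑ ω : Fin r → ι, (∏ l, p (ω l)) * (F i - univ.sup' hr (fun l => F (ω l))) := by
        simp only [mul_sub, sum_sub_distrib, ← sum_mul, htotal, one_mul]
    _ ≤ ∑ ω : Fin r → ι, (∏ l, p (ω l)) * (if ∀ l, ω l ≠ i then F i else 0) :=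
        sum_le_sum fun ω _ =>
          mul_le_mul_of_nonneg_left (hgap ω) (prod_nonneg fun l _ => hp0 (ω l))
    _ = (1 - p i) ^ r * F i := by
        simp only [mul_ite, mul_zero, ← sum_filter, ← sum_mul,
          sum_prod_filter_forall_ne_eq_pow hp i r]

end

theorem one_sub_div_le_div_add_one {a c x : ℝ} (ha : 0 < a) (hc : 0 < c) (h : c / a - 1 ≤ x) :
    1 - a / c ≤ x / (x + 1) := by
  have hx : 0 < x + 1 := by linarith [div_pos hc ha]
  have hinv : 1 / (x + 1) ≤ a / c := by
    rw [div_le_div_iff₀ hx hc]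
    linarith [(div_le_iff₀ ha).1 (sub_le_iff_le_add.1 h)]
  have hsplit : x / (x + 1) = 1 - 1 / (x + 1) := by field_simp; ring
  linarith

theorem proportional_sampling_bound_general {ι : Type*} [Fintype ι]
    (F : ι → ℝ) (hF : ∀ j, 0 ≤ F j)
    (c : ℝ) (hc : c = ∑ j, F j)
    (istar : ι) (hpos : 0 < F istar)
    (r : ℕ) (hr : 1 ≤ r) (hrc : c / F istar - 1 ≤ (r : ℝ)) :
    F istar -
      ∑ ω : Fin r → ι, (∏ l, F (ω l) / c) *
        (Finset.univ.sup' ⟨⟨0, hr⟩, Finset.mem_univ _⟩ fun l => F (ω l))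
      ≤ ((r : ℝ) / (r + 1)) ^ r * F istar := by
  classical
  have hFc : F istar ≤ c := hc ▸ single_le_sum (fun j _ => hF j) (mem_univ istar)
  have hc0 : 0 < c := hpos.trans_le hFc
  have hp : ∑ j, F j / c = 1 := by rw [← sum_div, ← hc, div_self hc0.ne']
  calc _ ≤ (1 - F istar / c) ^ r * F istar :=
        sub_sum_prod_mul_sup'_le (fun j => div_nonneg (hF j) hc0.le) hp hF istar _
    _ ≤ ((r : ℝ) / (r + 1)) ^ r * F istar := by
        have hmiss_nonneg : 0 ≤ 1 - F istar / c := sub_nonneg.2 ((div_le_one hc0).2 hFc)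
        gcongr
        exact one_sub_div_le_div_add_one hpos hc0 hrc

/-- Proportional sampling theorem: if `r` sets are sampled i.i.d. with probability
`Pr(A) = F(A)/c` and `A'` is the best sampled set, then
`F(A*) - E[F(A')] ≤ (r/(r+1))^r · F(A*)`, provided `c/F(A*) - 1 ≤ r`. -/
theorem proportional_sampling_bound {ι : Type*} [Fintype ι]
    (F : ι → ℝ) (hF : ∀ j, 0 ≤ F j)
    (c : ℝ) (hc : c = ∑ j, F j)
    (istar : ι) (hstar : ∀ j, F j ≤ F istar) (hpos : 0 < F istar)
    (r : ℕ) (hr : 1 ≤ r) (hrc : c / F istar - 1 ≤ (r : ℝ)) :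
    F istar -
      ∑ ω : Fin r → ι, (∏ l, F (ω l) / c) *
        (Finset.univ.sup' ⟨⟨0, hr⟩, Finset.mem_univ _⟩ fun l => F (ω l))
      ≤ ((r : ℝ) / (r + 1)) ^ r * F istar :=
  proportional_sampling_bound_general F hF c hc istar hpos r hr hrc
end

section
/- (Stochastic greedy guarantee) If F is non-negative, monotone and submodular, and stochastic greedy maximization in each of k iterations samples r = (n/k)·log(1/ε) elements uniformly at random from X \ A^S and adds the one with largest marginal gain, then E[F(A^S)] ≥ (1 - 1/e - ε)·F(A*), where A* maximizes F over sets of size k. -/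
/-!
Condition on the partial solution after `m` steps being `B`, and let `D = A* \ B`, so that
`t = |D| ≤ k`. A uniform `r`-subset `R` of the `N ≤ n` remaining elements misses `D` with
probability at most `(1 - r/N)^t ≤ ε^(t/k) ≤ 1 - (t/k)(1 - ε)`. By symmetry, averaging the
marginal gain over `R ∩ D` and then over `R` weights every element of `D` equally, with total
weight the probability of hitting `D`. The greedy gain dominates that average, so the expected
gain is at least `((1 - ε)/k) ∑_{x ∈ D} Δ(x | B) ≥ ((1 - ε)/k) (F(A*) - F(B))`, by
submodularity. Hence `F(A*) - E[F(A^S)]` shrinks by `1 - (1 - ε)/k` per step, and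
`(1 - (1 - ε)/k)^k ≤ e^(-(1 - ε)) ≤ e^(-1) + ε` by convexity of `exp`.
-/

open Finset

theorem exp_mul_le_mul_exp_add_one_sub {a : ℝ} (x : ℝ) (h0 : 0 ≤ a) (h1 : a ≤ 1) :
    Real.exp (a * x) ≤ a * Real.exp x + (1 - a) := by
  simpa using convexOn_exp.2 (Set.mem_univ x) (Set.mem_univ 0) h0 (sub_nonneg.2 h1) (by ring)

theorem sub_le_one_sub_pow_mul {g : ℕ → ℝ} {M c : ℝ} {k : ℕ} (hc : c ≤ 1) (hg0 : 0 ≤ g 0)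
    (hstep : ∀ m < k, c * (M - g m) ≤ g (m + 1) - g m) : M - g k ≤ (1 - c) ^ k * M := by
  induction k with
  | zero => simpa
  | succ k ih =>
    have hlast := hstep k k.lt_succ_self
    calc M - g (k + 1) ≤ (1 - c) * (M - g k) := by linarith
      _ ≤ (1 - c) * ((1 - c) ^ k * M) :=
          mul_le_mul_of_nonneg_left (ih fun m hm => hstep m (by omega)) (by linarith)
      _ = (1 - c) ^ (k + 1) * M := by ring

theorem one_sub_div_pow_le_exp_neg_one_add {k : ℕ} {ε : ℝ} (hk : 0 < k) (hε0 : 0 ≤ ε)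
    (hε1 : ε ≤ 1) : (1 - (1 - ε) / k) ^ k ≤ Real.exp (-1) + ε := by
  have hk' : (1 : ℝ) ≤ k := by exact_mod_cast hk
  calc (1 - (1 - ε) / k) ^ k ≤ Real.exp (-(1 - ε)) :=
        Real.one_sub_div_pow_le_exp_neg (by linarith)
    _ = Real.exp ((1 - ε) * -1) := by ring_nf
    _ ≤ (1 - ε) * Real.exp (-1) + (1 - (1 - ε)) :=
        exp_mul_le_mul_exp_add_one_sub (-1) (by linarith) (by linarith)
    _ ≤ Real.exp (-1) + ε := by nlinarith [Real.exp_pos (-1)]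

theorem choose_mul_le_choose_succ_mul_sub {M N : ℕ} (r : ℕ) (hMN : M + 1 ≤ N) :
    M.choose r * N ≤ (M + 1).choose r * (N - r) := by
  rcases lt_or_ge (M + 1) r with hr | hr
  · simp [Nat.choose_eq_zero_of_lt (by omega : M < r)]
  have hfrac : (M + 1 - r) * N ≤ (N - r) * (M + 1) := by
    rw [tsub_mul, tsub_mul, mul_comm N]
    exact Nat.sub_le_sub_left (Nat.mul_le_mul_left r hMN) _
  refine Nat.le_of_mul_le_mul_right ?_ (Nat.succ_pos M)
  calc M.choose r * N * (M + 1) = (M + 1).choose r * ((M + 1 - r) * N) := by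
        rw [mul_right_comm, Nat.choose_mul_succ_eq, mul_assoc]
    _ ≤ (M + 1).choose r * ((N - r) * (M + 1)) := Nat.mul_le_mul_left _ hfrac
    _ = (M + 1).choose r * (N - r) * (M + 1) := by ring

theorem choose_sub_mul_pow_le {N t : ℕ} (r : ℕ) (htN : t ≤ N) :
    (N - t).choose r * N ^ t ≤ N.choose r * (N - r) ^ t := by
  induction t with
  | zero => simp
  | succ t ih =>
    have hstep := choose_mul_le_choose_succ_mul_sub r (show N - (t + 1) + 1 ≤ N by omega)
    rw [show N - (t + 1) + 1 = N - t by omega] at hstep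
    calc (N - (t + 1)).choose r * N ^ (t + 1) = (N - (t + 1)).choose r * N * N ^ t := by ring
      _ ≤ (N - t).choose r * (N - r) * N ^ t := by gcongr
      _ = (N - t).choose r * N ^ t * (N - r) := by ring
      _ ≤ N.choose r * (N - r) ^ t * (N - r) := Nat.mul_le_mul_right _ (ih (by omega))
      _ = N.choose r * (N - r) ^ (t + 1) := by ring

-- `(N - t).choose r / N.choose r` is the probability that a uniform `r`-subset of an
-- `N`-set misses a fixed `t`-subset.
theorem choose_sub_le_choose_mul_exp {N r t : ℕ} (hN : 0 < N) (hrN : r ≤ N) (htN : t ≤ N) :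
    ((N - t).choose r : ℝ) ≤ N.choose r * Real.exp (-(r * t / N)) := by
  have hNR : (0 : ℝ) < N := by exact_mod_cast hN
  have hcount : ((N - t).choose r : ℝ) * N ^ t ≤ N.choose r * ((N : ℝ) - r) ^ t := by
    rw [← Nat.cast_sub hrN]; exact_mod_cast choose_sub_mul_pow_le r htN
  have hbase : ((N : ℝ) - r) / N ≤ Real.exp (-(r / N)) := by
    rw [sub_div, div_self hNR.ne']
    linarith [Real.add_one_le_exp (-(r / N : ℝ))]
  calc ((N - t).choose r : ℝ) ≤ N.choose r * (((N : ℝ) - r) / N) ^ t := by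
        rw [div_pow, ← mul_div_assoc, le_div_iff₀ (by positivity)]
        exact hcount
    _ ≤ N.choose r * Real.exp (-(r / N)) ^ t := by
        gcongr
        exact div_nonneg (sub_nonneg.2 (by exact_mod_cast hrN)) hNR.le
    _ = N.choose r * Real.exp (-(r * t / N)) := by
        rw [← Real.exp_nat_mul]; ring_nf

theorem mul_choose_le_choose_sub_choose {n k r N t : ℕ} {ε : ℝ} (hε : 0 < ε)
    (hr : (n / k : ℝ) * Real.log (1 / ε) ≤ r) (hN : 0 < N) (hNn : N ≤ n) (hrN : r ≤ N)
    (htN : t ≤ N) (htk : t ≤ k) :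
    (1 - ε) / k * t * N.choose r ≤ N.choose r - (N - t).choose r := by
  set a : ℝ := t / k
  have ha0 : 0 ≤ a := by positivity
  have ha1 : a ≤ 1 := div_le_one_of_le₀ (by exact_mod_cast htk) (by positivity)
  have hn : (0 : ℝ) < n := by exact_mod_cast hN.trans_le hNn
  have hexponent : -(r * t / N : ℝ) ≤ a * Real.log ε := by
    rw [one_div, Real.log_inv] at hr
    have h1 : a * -Real.log ε ≤ r * t / n :=
      calc a * -Real.log ε = t / n * (n / k * -Real.log ε) := by
            simp only [a]; field_simp
        _ ≤ t / n * r := by gcongr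
        _ = r * t / n := by ring
    have h2 : (r * t / n : ℝ) ≤ r * t / N :=
      div_le_div_of_nonneg_left (by positivity) (by exact_mod_cast hN) (by exact_mod_cast hNn)
    linarith
  have hconvex := exp_mul_le_mul_exp_add_one_sub (Real.log ε) ha0 ha1
  rw [Real.exp_log hε] at hconvex
  have hmiss : ((N - t).choose r : ℝ) ≤ N.choose r * (a * ε + (1 - a)) :=
    (choose_sub_le_choose_mul_exp hN hrN htN).trans
      (by gcongr; exact (Real.exp_le_exp.2 hexponent).trans hconvex)
  calc (1 - ε) / k * t * N.choose r = N.choose r - N.choose r * (a * ε + (1 - a)) := by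
        simp only [a]; ring
    _ ≤ N.choose r - (N - t).choose r := by linarith

theorem sum_powersetCard_map_perm {α β : Type*} [AddCommMonoid β] {U : Finset α}
    {σ : Equiv.Perm α} (hσ : U.map σ.toEmbedding = U) (r : ℕ) (f : Finset α → β) :
    ∑ s ∈ U.powersetCard r, f (s.map σ.toEmbedding) = ∑ s ∈ U.powersetCard r, f s := by
  conv_rhs => rw [← hσ, powersetCard_map, sum_map]
  rfl

section Sampling

variable {α : Type*} [DecidableEq α]

theorem card_filter_not_disjoint_powersetCard_add {U D : Finset α} (hDU : D ⊆ U) (r : ℕ) :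
    #{s ∈ U.powersetCard r | ¬Disjoint s D} + (#U - #D).choose r = (#U).choose r := by
  have hmiss : {s ∈ U.powersetCard r | Disjoint s D} = (U \ D).powersetCard r := by
    ext s
    simp only [mem_filter, mem_powersetCard, subset_sdiff]
    tauto
  rw [← card_sdiff_of_subset hDU, ← card_powersetCard, ← hmiss, ← card_powersetCard r U,
    add_comm, card_filter_add_card_filter_not]

theorem sum_powersetCard_ite_mem_inv_card_inter_eq {U D : Finset α} (hDU : D ⊆ U) (r : ℕ)
    {i j : α} (hi : i ∈ D) (hj : j ∈ D) :
    ∑ s ∈ U.powersetCard r, (if i ∈ s then (#(s ∩ D) : ℝ)⁻¹ else 0) =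
      ∑ s ∈ U.powersetCard r, (if j ∈ s then (#(s ∩ D) : ℝ)⁻¹ else 0) := by
  set σ := Equiv.swap i j
  have hσ {S : Finset α} (hiS : i ∈ S) (hjS : j ∈ S) : S.map σ.toEmbedding = S :=
    map_perm fun x hx => by
      rcases (Equiv.swap_apply_ne_self_iff.1 hx).2 with rfl | rfl <;> assumption
  rw [← sum_powersetCard_map_perm (hσ (hDU hi) (hDU hj)) r]
  refine sum_congr rfl fun s _ => ?_
  have hinter : s.map σ.toEmbedding ∩ D = (s ∩ D).map σ.toEmbedding := by
    conv_lhs => rw [← hσ hi hj]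
    rw [map_inter]
  simp [hinter, mem_map_equiv, σ]

theorem sum_powersetCard_sum_inter_div_card {U D : Finset α} (hDU : D ⊆ U) (r : ℕ)
    (Δ : α → ℝ) :
    ∑ s ∈ U.powersetCard r, (∑ x ∈ s ∩ D, Δ x) / #(s ∩ D) =
      #{s ∈ U.powersetCard r | ¬Disjoint s D} / #D * ∑ x ∈ D, Δ x := by
  set w : α → ℝ := fun x => ∑ s ∈ U.powersetCard r, if x ∈ s then (#(s ∩ D) : ℝ)⁻¹ else 0
  have hsplit : ∑ s ∈ U.powersetCard r, (∑ x ∈ s ∩ D, Δ x) / #(s ∩ D) =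
      ∑ x ∈ D, Δ x * w x := by
    simp only [w, mul_sum, mul_ite, mul_zero]
    rw [sum_comm]
    refine sum_congr rfl fun s _ => ?_
    rw [sum_ite_mem, inter_comm, sum_div]
    rfl
  have hfiber (s : Finset α) :
      ∑ x ∈ D, (if x ∈ s then (#(s ∩ D) : ℝ)⁻¹ else 0) = if ¬Disjoint s D then 1 else 0 := by
    rw [sum_ite_mem, sum_const, inter_comm, nsmul_eq_mul]
    split_ifs with h
    · simp [disjoint_iff_inter_eq_empty.1 h]
    · have hne : (s ∩ D).Nonempty := not_disjoint_iff_nonempty_inter.1 h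
      exact mul_inv_cancel₀ (Nat.cast_ne_zero.2 hne.card_pos.ne')
  have hwsum : ∑ x ∈ D, w x = #{s ∈ U.powersetCard r | ¬Disjoint s D} := by
    simp only [w]
    rw [sum_comm, sum_congr rfl fun s _ => hfiber s, sum_boole]
  rcases D.eq_empty_or_nonempty with rfl | ⟨i, hi⟩
  · simp
  have hw : ∀ x ∈ D, w x = #{s ∈ U.powersetCard r | ¬Disjoint s D} / #D := by
    have hconst : ∀ x ∈ D, w x = w i := fun x hx =>
      sum_powersetCard_ite_mem_inv_card_inter_eq hDU r hx hi
    intro x hx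
    rw [← hwsum, sum_congr rfl hconst, sum_const, nsmul_eq_mul,
      mul_div_cancel_left₀ _ (by exact_mod_cast (card_pos.2 ⟨i, hi⟩).ne'), hconst x hx]
  rw [hsplit, mul_sum]
  exact sum_congr rfl fun x hx => by rw [hw x hx, mul_comm]

end Sampling

theorem sum_ite_mul_eq_of_uniform {Ω γ : Type*} [Fintype Ω] [DecidableEq γ] (q : Ω → ℝ)
    (E : Ω → Prop) [DecidablePred E] {X : Ω → γ} {𝒮 : Finset γ} {p : ℝ}
    (hX : ∀ ω, E ω → X ω ∈ 𝒮) (hp : ∀ s ∈ 𝒮, (∑ ω, if E ω ∧ X ω = s then q ω else 0) = p)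
    (h : γ → ℝ) :
    ∑ ω, (if E ω then q ω * h (X ω) else 0) = p * ∑ s ∈ 𝒮, h s := by
  calc ∑ ω, (if E ω then q ω * h (X ω) else 0)
      = ∑ ω, ∑ s ∈ 𝒮, if E ω ∧ X ω = s then q ω * h s else 0 := by
        refine sum_congr rfl fun ω _ => ?_
        by_cases hE : E ω
        · simp [hE, hX ω hE]
        · simp [hE]
    _ = ∑ s ∈ 𝒮, (∑ ω, if E ω ∧ X ω = s then q ω else 0) * h s := by
        rw [sum_comm]
        simp only [sum_mul, ite_mul, zero_mul]
    _ = p * ∑ s ∈ 𝒮, h s := by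
        rw [mul_sum]
        exact sum_congr rfl fun s hs => by rw [hp s hs]

theorem sum_div_card_le_of_forall_le {ι : Type*} {s : Finset ι} {f : ι → ℝ} {G : ℝ}
    (hG : 0 ≤ G) (hf : ∀ x ∈ s, f x ≤ G) : (∑ x ∈ s, f x) / #s ≤ G := by
  rcases s.eq_empty_or_nonempty with rfl | hs
  · simpa
  rw [div_le_iff₀ (by exact_mod_cast hs.card_pos)]
  simpa [mul_comm] using sum_le_card_nsmul s f G hf

theorem sub_le_sum_insert_sub_of_submodular {α : Type*} [DecidableEq α] {F : Finset α → ℝ}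
    (hsub : ∀ (A B : Finset α) (i : α), A ⊆ B → i ∉ B →
      F (insert i B) - F B ≤ F (insert i A) - F A) (S B : Finset α) :
    F (S ∪ B) - F B ≤ ∑ i ∈ S \ B, (F (insert i B) - F B) := by
  induction S using Finset.induction_on with
  | empty => simp
  | @insert a S haS ih =>
    by_cases haB : a ∈ B
    · rwa [insert_union, insert_eq_of_mem (mem_union_right S haB), insert_sdiff_of_mem S haB]
    · have hgain := hsub B (S ∪ B) a subset_union_right (by simp [haS, haB])
      rw [insert_union, insert_sdiff_of_notMem S haB, sum_insert (by simp [haS])]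
      linarith

section StochasticGreedy

variable {α Ω : Type*} [Fintype α] [DecidableEq α] [Fintype Ω] {q : Ω → ℝ}
  {F : Finset α → ℝ} {A A' R : Ω → Finset α}

theorem conditional_gain_ge (hq0 : ∀ ω, 0 ≤ q ω)
    (hmono : ∀ A B : Finset α, A ⊆ B → F A ≤ F B)
    (hsub : ∀ (A B : Finset α) (i : α), A ⊆ B → i ∉ B →
      F (insert i B) - F B ≤ F (insert i A) - F A)
    {B Astar : Finset α} {r : ℕ} {c : ℝ} (hc : 0 ≤ c) (hrB : r ≤ #(univ \ B))
    (hhit : c * #(Astar \ B) * (#(univ \ B)).choose r ≤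
      #{s ∈ (univ \ B).powersetCard r | ¬Disjoint s (Astar \ B)})
    (hR : ∀ ω, A ω = B → R ω ∈ (univ \ B).powersetCard r)
    (hunif : ∀ s ∈ (univ \ B).powersetCard r,
      (∑ ω, if A ω = B ∧ R ω = s then q ω else 0) * (#(univ \ B)).choose r
        = ∑ ω, if A ω = B then q ω else 0)
    (hstep : ∀ ω, A ω = B → ∃ i ∈ R ω, A' ω = insert i B ∧
      ∀ j ∈ R ω, F (insert j B) - F B ≤ F (insert i B) - F B) :
    c * ∑ ω, (if A ω = B then q ω * (F Astar - F (A ω)) else 0) ≤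
      ∑ ω, if A ω = B then q ω * (F (A' ω) - F (A ω)) else 0 := by
  set U := univ \ B
  set D := Astar \ B
  set Δ : α → ℝ := fun x => F (insert x B) - F B
  set P := ∑ ω, if A ω = B then q ω else 0
  set C : ℝ := ((#U).choose r : ℝ)
  set H : ℝ := (#{s ∈ U.powersetCard r | ¬Disjoint s D} : ℝ)
  set average : Finset α → ℝ := fun s => (∑ x ∈ s ∩ D, Δ x) / #(s ∩ D)
  have hC : 0 < C := Nat.cast_pos.2 (Nat.choose_pos hrB)
  have hΔ : ∀ x, 0 ≤ Δ x := fun x => sub_nonneg.2 (hmono _ _ (subset_insert x B))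
  have hP : 0 ≤ P := sum_nonneg fun ω _ => by split_ifs <;> simp [hq0]
  have hDΔ : F Astar - F B ≤ ∑ x ∈ D, Δ x :=
    (sub_le_sub_right (hmono _ _ subset_union_left) _).trans
      (sub_le_sum_insert_sub_of_submodular hsub Astar B)
  have hgreedy : ∀ ω, A ω = B → average (R ω) ≤ F (A' ω) - F B := by
    intro ω hω
    obtain ⟨i, -, hA', hmax⟩ := hstep ω hω
    rw [hA']
    exact sum_div_card_le_of_forall_le (hΔ i) fun x hx => hmax x (mem_inter.1 hx).1
  have hsampled : ∑ ω, (if A ω = B then q ω * average (R ω) else 0) =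
      P / C * (H / #D * ∑ x ∈ D, Δ x) := by
    rw [sum_ite_mul_eq_of_uniform q (A · = B) hR
        (fun s hs => by rw [eq_div_iff hC.ne', hunif s hs]) average,
      sum_powersetCard_sum_inter_div_card (sdiff_subset_sdiff (subset_univ _) le_rfl)]
  have hcoef : c * P * ∑ x ∈ D, Δ x ≤ P / C * (H / #D * ∑ x ∈ D, Δ x) := by
    rcases D.eq_empty_or_nonempty with hD | hD
    · simp [hD]
    have ht : (0 : ℝ) < #D := by exact_mod_cast hD.card_pos
    have hc' : c ≤ H / (#D * C) := by
      rw [le_div_iff₀ (by positivity)]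
      linarith
    calc c * P * ∑ x ∈ D, Δ x ≤ H / (#D * C) * P * ∑ x ∈ D, Δ x := by
          gcongr
          exact sum_nonneg fun x _ => hΔ x
      _ = P / C * (H / #D * ∑ x ∈ D, Δ x) := by field_simp
  calc c * ∑ ω, (if A ω = B then q ω * (F Astar - F (A ω)) else 0)
      = c * P * (F Astar - F B) := by
        rw [mul_assoc, sum_mul]
        congr 1
        exact sum_congr rfl fun ω _ => by split_ifs with h <;> simp [h]
    _ ≤ c * P * ∑ x ∈ D, Δ x := by gcongr
    _ ≤ ∑ ω, (if A ω = B then q ω * average (R ω) else 0) := hsampled ▸ hcoef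
    _ ≤ ∑ ω, if A ω = B then q ω * (F (A' ω) - F (A ω)) else 0 := by
        refine sum_le_sum fun ω _ => ?_
        split_ifs with h
        · rw [h]
          exact mul_le_mul_of_nonneg_left (hgreedy ω h) (hq0 ω)
        · rfl

theorem expected_gain_ge (hq0 : ∀ ω, 0 ≤ q ω) (hq1 : ∑ ω, q ω = 1)
    (hmono : ∀ A B : Finset α, A ⊆ B → F A ≤ F B)
    (hsub : ∀ (A B : Finset α) (i : α), A ⊆ B → i ∉ B →
      F (insert i B) - F B ≤ F (insert i A) - F A)
    {n k r m : ℕ} {ε : ℝ} (hn : Fintype.card α = n) (hrk : r + k ≤ n) (hm : m < k)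
    (hε0 : 0 < ε) (hε1 : ε ≤ 1) (hr : ((n : ℝ) / k) * Real.log (1 / ε) ≤ r)
    {Astar : Finset α} (hcard : #Astar ≤ k) (hA : ∀ ω, #(A ω) = m)
    (hR : ∀ ω, R ω ⊆ univ \ A ω ∧ #(R ω) = r)
    (hunif : ∀ B s : Finset α, s ⊆ univ \ B → #s = r →
      (∑ ω, if A ω = B ∧ R ω = s then q ω else 0) * ((n - #B).choose r : ℝ)
        = ∑ ω, if A ω = B then q ω else 0)
    (hstep : ∀ ω, ∃ i ∈ R ω, A' ω = insert i (A ω) ∧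
      ∀ j ∈ R ω, F (insert j (A ω)) - F (A ω) ≤ F (insert i (A ω)) - F (A ω)) :
    (1 - ε) / k * (F Astar - ∑ ω, q ω * F (A ω)) ≤
      ∑ ω, q ω * F (A' ω) - ∑ ω, q ω * F (A ω) := by
  have hfiber (f : Ω → ℝ) : ∑ B, ∑ ω, (if A ω = B then f ω else 0) = ∑ ω, f ω := by
    rw [sum_comm]
    simp
  have hconditional (B : Finset α) :
      (1 - ε) / k * ∑ ω, (if A ω = B then q ω * (F Astar - F (A ω)) else 0) ≤
        ∑ ω, if A ω = B then q ω * (F (A' ω) - F (A ω)) else 0 := by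
    by_cases hBm : #B = m
    swap
    · have hne : ∀ ω, A ω ≠ B := fun ω h => hBm (h ▸ hA ω)
      simp [hne]
    have hU : #(univ \ B) = n - m := by rw [card_univ_sdiff, hn, hBm]
    have hDU : Astar \ B ⊆ univ \ B := sdiff_subset_sdiff (subset_univ _) le_rfl
    refine conditional_gain_ge hq0 hmono hsub (div_nonneg (by linarith) k.cast_nonneg)
      (by omega) ?_
      (fun ω h => mem_powersetCard.2 ⟨h ▸ (hR ω).1, (hR ω).2⟩)
      (fun s hs => by
        rw [card_univ_sdiff, hn]
        exact hunif B s (mem_powersetCard.1 hs).1 (mem_powersetCard.1 hs).2)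
      (fun ω h => h ▸ hstep ω)
    have hcount := card_filter_not_disjoint_powersetCard_add hDU r
    have hbound := mul_choose_le_choose_sub_choose hε0 hr (by omega) (hU ▸ Nat.sub_le n m)
      (by omega) (card_le_card hDU) ((card_le_card sdiff_subset).trans hcard)
    rw [hU] at hcount hbound ⊢
    have hcountR : (#{s ∈ (univ \ B).powersetCard r | ¬Disjoint s (Astar \ B)} : ℝ) +
        (n - m - #(Astar \ B)).choose r = (n - m).choose r := by exact_mod_cast hcount
    linarith
  calc (1 - ε) / k * (F Astar - ∑ ω, q ω * F (A ω))
      = ∑ B, (1 - ε) / k * ∑ ω, (if A ω = B then q ω * (F Astar - F (A ω)) else 0) := by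
        rw [← mul_sum, hfiber]
        simp only [mul_sub, sum_sub_distrib, ← sum_mul, hq1, one_mul]
    _ ≤ ∑ B, ∑ ω, (if A ω = B then q ω * (F (A' ω) - F (A ω)) else 0) :=
        sum_le_sum fun B _ => hconditional B
    _ = ∑ ω, q ω * F (A' ω) - ∑ ω, q ω * F (A ω) := by
        rw [hfiber, ← sum_sub_distrib]
        simp only [mul_sub]

end StochasticGreedy

/-- Randomness is modelled by a finite probability space `(Ω, q)`; `AS m` is the partial
solution after `m` iterations and `R m` the set sampled in iteration `m`. -/
theorem stochastic_greedy_guarantee_general {α : Type*} [Fintype α] [DecidableEq α]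
    (F : Finset α → ℝ)
    (hnn : ∀ A : Finset α, 0 ≤ F A)
    (hmono : ∀ A B : Finset α, A ⊆ B → F A ≤ F B)
    (hsub : ∀ (A B : Finset α) (i : α), A ⊆ B → i ∉ B →
      F (insert i B) - F B ≤ F (insert i A) - F A)
    (n k r : ℕ) (hn : Fintype.card α = n) (hk : 0 < k) (hrk : r + k ≤ n)
    (ε : ℝ) (hε0 : 0 < ε) (hε1 : ε < 1)
    (hr : ((n : ℝ) / k) * Real.log (1 / ε) ≤ (r : ℝ))
    (Ω : Type*) [Fintype Ω] (q : Ω → ℝ)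
    (hq0 : ∀ ω, 0 ≤ q ω) (hq1 : ∑ ω, q ω = 1)
    (AS R : ℕ → Ω → Finset α)
    (h0 : ∀ ω, AS 0 ω = ∅)
    (hR : ∀ m < k, ∀ ω, R m ω ⊆ Finset.univ \ AS m ω ∧ (R m ω).card = r)
    -- conditional on `AS m = B`, the sample `R m` is uniform over the size-`r`
    -- subsets of `X \ B`:
    (hunif : ∀ m < k, ∀ B s : Finset α, s ⊆ Finset.univ \ B → s.card = r →
      (∑ ω, if AS m ω = B ∧ R m ω = s then q ω else 0) * ((n - B.card).choose r : ℝ)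
        = ∑ ω, if AS m ω = B then q ω else 0)
    (hstep : ∀ m < k, ∀ ω, ∃ i ∈ R m ω, AS (m + 1) ω = insert i (AS m ω) ∧
      ∀ j ∈ R m ω, F (insert j (AS m ω)) - F (AS m ω) ≤ F (insert i (AS m ω)) - F (AS m ω))
    (Astar : Finset α) (hcard : Astar.card = k) :
    (1 - Real.exp (-1) - ε) * F Astar ≤ ∑ ω, q ω * F (AS k ω) := by
  have hcardAS : ∀ m ≤ k, ∀ ω, #(AS m ω) = m := by
    intro m hm ω
    induction m with
    | zero => simp [h0]
    | succ m ih =>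
      obtain ⟨i, hi, hins, -⟩ := hstep m hm ω
      rw [hins, card_insert_of_notMem (mem_sdiff.1 ((hR m hm ω).1 hi)).2, ih (by omega)]
  set g : ℕ → ℝ := fun m => ∑ ω, q ω * F (AS m ω)
  have hgain : ∀ m < k, (1 - ε) / k * (F Astar - g m) ≤ g (m + 1) - g m := fun m hm =>
    expected_gain_ge hq0 hq1 hmono hsub hn hrk hm hε0 hε1.le hr hcard.le (hcardAS m hm.le)
      (hR m hm) (hunif m hm) (hstep m hm)
  have hc : (1 - ε) / k ≤ 1 :=
    div_le_one_of_le₀ (by linarith [show (1 : ℝ) ≤ k by exact_mod_cast hk]) k.cast_nonneg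
  have hg0 : 0 ≤ g 0 := sum_nonneg fun ω _ => mul_nonneg (hq0 ω) (hnn _)
  have hdecay := sub_le_one_sub_pow_mul hc hg0 hgain
  have hpow := one_sub_div_pow_le_exp_neg_one_add hk hε0.le hε1.le
  nlinarith [hnn Astar]

/-- Stochastic greedy guarantee: if in each of `k` iterations a uniformly random subset
`R` of size `r ≥ (n/k)·log(1/ε)` of `X \ A^S` is sampled and the element of `R` with the
largest marginal gain is added, then `E[F(A^S)] ≥ (1 - 1/e - ε)·F(A*)` for non-negative
monotone submodular `F`.  Randomness is modelled by a finite probability space `(Ω, q)`;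
`AS m` is the (random) partial solution after `m` iterations and `R m` the sampled set. -/
theorem stochastic_greedy_guarantee {α : Type*} [Fintype α] [DecidableEq α]
    (F : Finset α → ℝ)
    (hnn : ∀ A : Finset α, 0 ≤ F A)
    (hmono : ∀ A B : Finset α, A ⊆ B → F A ≤ F B)
    (hsub : ∀ (A B : Finset α) (i : α), A ⊆ B → i ∉ B →
      F (insert i B) - F B ≤ F (insert i A) - F A)
    (n k r : ℕ) (hn : Fintype.card α = n) (hk : 0 < k) (hrk : r + k ≤ n) (hr1 : 1 ≤ r)
    (ε : ℝ) (hε0 : 0 < ε) (hε1 : ε < 1)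
    (hr : ((n : ℝ) / k) * Real.log (1 / ε) ≤ (r : ℝ))
    (Ω : Type*) [Fintype Ω] (q : Ω → ℝ)
    (hq0 : ∀ ω, 0 ≤ q ω) (hq1 : ∑ ω, q ω = 1)
    (AS R : ℕ → Ω → Finset α)
    (h0 : ∀ ω, AS 0 ω = ∅)
    (hR : ∀ m < k, ∀ ω, R m ω ⊆ Finset.univ \ AS m ω ∧ (R m ω).card = r)
    -- conditional on `AS m = B`, the sample `R m` is uniform over the size-`r`
    -- subsets of `X \ B`:
    (hunif : ∀ m < k, ∀ B s : Finset α, s ⊆ Finset.univ \ B → s.card = r →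
      (∑ ω, if AS m ω = B ∧ R m ω = s then q ω else 0) * ((n - B.card).choose r : ℝ)
        = ∑ ω, if AS m ω = B then q ω else 0)
    (hstep : ∀ m < k, ∀ ω, ∃ i ∈ R m ω, AS (m + 1) ω = insert i (AS m ω) ∧
      ∀ j ∈ R m ω, F (insert j (AS m ω)) - F (AS m ω) ≤ F (insert i (AS m ω)) - F (AS m ω))
    (Astar : Finset α) (hcard : Astar.card = k)
    (hopt : ∀ B : Finset α, B.card ≤ k → F B ≤ F Astar) :
    (1 - Real.exp (-1) - ε) * F Astar ≤ ∑ ω, q ω * F (AS k ω) :=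
  stochastic_greedy_guarantee_general F hnn hmono hsub n k r hn hk hrk ε hε0 hε1 hr Ω q hq0 hq1 AS R
    h0 hR hunif hstep Astar hcard
end

section
/- (Full PartiMax guarantee) If in each of k iterations the greedy step incurs multiplicative loss at most δ = (r/(r+1))^r relative to the best marginal gain (in expectation), then the final set A^S satisfies E[f(A^S)] ≥ (1 - 1/e - δ)·f(A*) for monotone submodular non-negative f. -/
/-!
Write `OPT = f A*` and `g m` for the expected value after `m` steps. By submodularity and
monotonicity, adding the at most `k` elements of `A*` to `A` gains at most `k` times the best
single marginal gain at `A`, so the expected step gain is at least `(1 - δ)/k · (OPT - g m)`.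
Hence the gap `OPT - g m` shrinks by the factor `1 - (1 - δ)/k` per step, and after `k` steps
it is at most `(1 - (1 - δ)/k)^k · OPT ≤ exp (δ - 1) · OPT ≤ (exp (-1) + δ) · OPT`, the last
step by convexity of `exp` on `[-1, 0]`.
-/

open Finset

section Submodular

variable {α : Type*} [DecidableEq α] {f : Finset α → ℝ}

/-- `max_i Δ_f(i | A)` in the paper's notation. -/
noncomputable def maxMarginalGain [Fintype α] [Nonempty α] (f : Finset α → ℝ) (A : Finset α) :
    ℝ :=
  univ.sup' univ_nonempty fun i => f (insert i A) - f A

theorem le_add_card_mul_of_marginal_le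
    (hsub : ∀ (A B : Finset α) (i : α), A ⊆ B → i ∉ B →
      f (insert i B) - f B ≤ f (insert i A) - f A)
    {A : Finset α} {M : ℝ} (hM0 : 0 ≤ M) (hM : ∀ i, f (insert i A) - f A ≤ M)
    (B : Finset α) : f (A ∪ B) ≤ f A + #B * M := by
  induction B using Finset.induction_on with
  | empty => simp
  | @insert i B hiB ih =>
    rw [union_insert, card_insert_of_notMem hiB]
    push_cast
    by_cases hi : i ∈ A ∪ B
    · rw [insert_eq_self.mpr hi]
      linarith
    · linarith [hsub A (A ∪ B) i subset_union_left hi, hM i]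

theorem maxMarginalGain_nonneg [Fintype α] [Nonempty α]
    (hmono : ∀ A B : Finset α, A ⊆ B → f A ≤ f B) (A : Finset α) :
    0 ≤ maxMarginalGain f A := by
  obtain ⟨i⟩ := ‹Nonempty α›
  exact (sub_nonneg.mpr (hmono _ _ (subset_insert i A))).trans
    (le_sup' (fun j => f (insert j A) - f A) (mem_univ i))

theorem sub_le_card_mul_maxMarginalGain [Fintype α] [Nonempty α]
    (hmono : ∀ A B : Finset α, A ⊆ B → f A ≤ f B)
    (hsub : ∀ (A B : Finset α) (i : α), A ⊆ B → i ∉ B →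
      f (insert i B) - f B ≤ f (insert i A) - f A)
    (A : Finset α) {B : Finset α} {k : ℕ} (hB : #B ≤ k) :
    f B - f A ≤ k * maxMarginalGain f A := by
  have hM0 := maxMarginalGain_nonneg hmono A
  have hunion := le_add_card_mul_of_marginal_le hsub hM0
    (fun i => le_sup' (fun j => f (insert j A) - f A) (mem_univ i)) B
  have hcard : (#B : ℝ) * maxMarginalGain f A ≤ k * maxMarginalGain f A :=
    mul_le_mul_of_nonneg_right (by exact_mod_cast hB) hM0
  linarith [hmono B (A ∪ B) subset_union_right]

end Submodular

theorem expected_gap_succ_le {Ω : Type*} [Fintype Ω] {q : Ω → ℝ} (hq0 : ∀ ω, 0 ≤ q ω)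
    (hq1 : ∑ ω, q ω = 1) {k : ℕ} (hk : 0 < k) {δ : ℝ} (hδ : δ ≤ 1) {opt : ℝ}
    {a a' M : Ω → ℝ} (hgap : ∀ ω, opt - a ω ≤ k * M ω)
    (hgain : (1 - δ) * ∑ ω, q ω * M ω ≤ ∑ ω, q ω * (a' ω - a ω)) :
    opt - ∑ ω, q ω * a' ω ≤ (1 - (1 - δ) / k) * (opt - ∑ ω, q ω * a ω) := by
  have hkpos : (0 : ℝ) < k := by exact_mod_cast hk
  have hgapE : opt - ∑ ω, q ω * a ω ≤ k * ∑ ω, q ω * M ω := calc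
    opt - ∑ ω, q ω * a ω = ∑ ω, q ω * (opt - a ω) := by
      simp only [mul_sub, sum_sub_distrib, ← sum_mul, hq1, one_mul]
    _ ≤ ∑ ω, q ω * (k * M ω) := sum_le_sum fun ω _ => mul_le_mul_of_nonneg_left (hgap ω) (hq0 ω)
    _ = k * ∑ ω, q ω * M ω := by rw [mul_sum]; simp only [mul_left_comm]
  have hgainE : ∑ ω, q ω * (a' ω - a ω) = ∑ ω, q ω * a' ω - ∑ ω, q ω * a ω := by
    simp only [mul_sub, sum_sub_distrib]
  have hshrink : (1 - δ) / k * (opt - ∑ ω, q ω * a ω) ≤ (1 - δ) * ∑ ω, q ω * M ω := by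
    rw [div_mul_eq_mul_div, div_le_iff₀ hkpos, mul_assoc, mul_comm (∑ ω, q ω * M ω)]
    exact mul_le_mul_of_nonneg_left hgapE (sub_nonneg.mpr hδ)
  linarith

theorem exp_sub_one_le_exp_neg_one_add {δ : ℝ} (hδ0 : 0 ≤ δ) (hδ1 : δ ≤ 1) :
    Real.exp (δ - 1) ≤ Real.exp (-1) + δ := by
  have hconv := convexOn_exp.2 (Set.mem_univ (-1)) (Set.mem_univ 0) (sub_nonneg.mpr hδ1) hδ0
    (by ring)
  simp only [smul_eq_mul, mul_zero, add_zero, Real.exp_zero, mul_one] at hconv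
  have : (1 - δ) * -1 = δ - 1 := by ring
  rw [this] at hconv
  nlinarith [Real.exp_pos (-1)]

theorem div_succ_pow_self_mem_Icc (r : ℕ) : ((r : ℝ) / (r + 1)) ^ r ∈ Set.Icc 0 1 :=
  ⟨by positivity, pow_le_one₀ (by positivity) ((div_le_one (by positivity)).mpr (by linarith))⟩

theorem partimax_guarantee_general {α : Type*} [Fintype α] [DecidableEq α] [Nonempty α]
    (f : Finset α → ℝ)
    (hnn : ∀ A : Finset α, 0 ≤ f A)
    (hmono : ∀ A B : Finset α, A ⊆ B → f A ≤ f B)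
    (hsub : ∀ (A B : Finset α) (i : α), A ⊆ B → i ∉ B →
      f (insert i B) - f B ≤ f (insert i A) - f A)
    (k : ℕ) (hk : 0 < k) (r : ℕ)
    (δ : ℝ) (hδ : δ = ((r : ℝ) / (r + 1)) ^ r)
    (Ω : Type*) [Fintype Ω] (q : Ω → ℝ)
    (hq0 : ∀ ω, 0 ≤ q ω) (hq1 : ∑ ω, q ω = 1)
    (AS : ℕ → Ω → Finset α)
    (h0 : ∀ ω, AS 0 ω = ∅)
    -- expected gain of each iteration is at least `(1-δ)` times the best marginal gain:
    (hexp : ∀ m < k,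
      (1 - δ) * (∑ ω, q ω *
          (Finset.univ.sup' Finset.univ_nonempty fun i => f (insert i (AS m ω)) - f (AS m ω)))
        ≤ ∑ ω, q ω * (f (AS (m + 1) ω) - f (AS m ω)))
    (Astar : Finset α) (hcard : Astar.card ≤ k) :
    (1 - Real.exp (-1) - δ) * f Astar ≤ ∑ ω, q ω * f (AS k ω) := by
  obtain ⟨hδ0, hδ1⟩ : δ ∈ Set.Icc 0 1 := hδ ▸ div_succ_pow_self_mem_Icc r
  have hk1 : (1 : ℝ) ≤ k := by exact_mod_cast hk
  have hc0 : 0 ≤ 1 - (1 - δ) / k := sub_nonneg.mpr ((div_le_one (by linarith)).mpr (by linarith))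
  set gap : ℕ → ℝ := fun m => f Astar - ∑ ω, q ω * f (AS m ω) with hgap_def
  have hgap0 : gap 0 ≤ f Astar := by
    simp only [gap, h0, ← sum_mul, hq1, one_mul, sub_le_self_iff, hnn]
  have hfactor : (1 - (1 - δ) / k) ^ k ≤ Real.exp (-1) + δ := calc
    _ ≤ Real.exp (-(1 - δ)) := Real.one_sub_div_pow_le_exp_neg (by linarith)
    _ = Real.exp (δ - 1) := by rw [neg_sub]
    _ ≤ Real.exp (-1) + δ := exp_sub_one_le_exp_neg_one_add hδ0 hδ1
  have hgapk : gap k ≤ (Real.exp (-1) + δ) * f Astar := calc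
    gap k ≤ (1 - (1 - δ) / k) ^ k * gap 0 :=
      le_geom hc0 k fun m hm => expected_gap_succ_le hq0 hq1 hk hδ1
        (fun ω => sub_le_card_mul_maxMarginalGain hmono hsub (AS m ω) hcard) (hexp m hm)
    _ ≤ (1 - (1 - δ) / k) ^ k * f Astar := mul_le_mul_of_nonneg_left hgap0 (pow_nonneg hc0 k)
    _ ≤ (Real.exp (-1) + δ) * f Astar := mul_le_mul_of_nonneg_right hfactor (hnn Astar)
  rw [hgap_def] at hgapk
  linarith

/-- Full PartiMax guarantee: if in each of `k` iterations the (random) greedy step incurs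
multiplicative loss at most `δ = (r/(r+1))^r` in expectation relative to the best marginal
gain, then the final set satisfies `E[f(A^S)] ≥ (1 - 1/e - δ)·f(A*)` for non-negative
monotone submodular `f`. -/
theorem partimax_guarantee {α : Type*} [Fintype α] [DecidableEq α] [Nonempty α]
    (f : Finset α → ℝ)
    (hnn : ∀ A : Finset α, 0 ≤ f A)
    (hmono : ∀ A B : Finset α, A ⊆ B → f A ≤ f B)
    (hsub : ∀ (A B : Finset α) (i : α), A ⊆ B → i ∉ B →
      f (insert i B) - f B ≤ f (insert i A) - f A)
    (k : ℕ) (hk : 0 < k) (r : ℕ) (hr : 1 ≤ r)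
    (δ : ℝ) (hδ : δ = ((r : ℝ) / (r + 1)) ^ r)
    (Ω : Type*) [Fintype Ω] (q : Ω → ℝ)
    (hq0 : ∀ ω, 0 ≤ q ω) (hq1 : ∑ ω, q ω = 1)
    (AS : ℕ → Ω → Finset α)
    (h0 : ∀ ω, AS 0 ω = ∅)
    (hstep : ∀ m < k, ∀ ω, ∃ i ∉ AS m ω, AS (m + 1) ω = insert i (AS m ω))
    -- expected gain of each iteration is at least `(1-δ)` times the best marginal gain:
    (hexp : ∀ m < k,
      (1 - δ) * (∑ ω, q ω *
          (Finset.univ.sup' Finset.univ_nonempty fun i => f (insert i (AS m ω)) - f (AS m ω)))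
        ≤ ∑ ω, q ω * (f (AS (m + 1) ω) - f (AS m ω)))
    (Astar : Finset α) (hcard : Astar.card ≤ k)
    (hopt : ∀ B : Finset α, B.card ≤ k → f B ≤ f Astar) :
    (1 - Real.exp (-1) - δ) * f Astar ≤ ∑ ω, q ω * f (AS k ω) :=
  partimax_guarantee_general f hnn hmono hsub k hk r δ hδ Ω q hq0 hq1 AS h0 hexp Astar hcard
end

section
/- (Greedy gap via optimal elements) For monotone submodular non-negative f, any set A, and the optimum A* of size k: max_{i ∈ X\A} Δ_f(i|A) ≥ (1/k)·(f(A*) - f(A)). -/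
/-- Greedy gap via optimal elements: for non-negative monotone submodular `f`, any set `A`
(with `X \ A` nonempty), and any `A*` of size at most `k`,
`max_{i ∈ X \ A} Δ_f(i|A) ≥ (1/k)·(f(A*) - f(A))`. -/
theorem greedy_gap {α : Type*} [Fintype α] [DecidableEq α]
    (f : Finset α → ℝ)
    (hnn : ∀ A : Finset α, 0 ≤ f A)
    (hmono : ∀ A B : Finset α, A ⊆ B → f A ≤ f B)
    (hsub : ∀ (A B : Finset α) (i : α), A ⊆ B → i ∉ B →
      f (insert i B) - f B ≤ f (insert i A) - f A)
    (k : ℕ) (hk : 0 < k)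
    (A : Finset α) (hne : (Finset.univ \ A).Nonempty)
    (Astar : Finset α) (hcard : Astar.card ≤ k) :
    (1 / (k : ℝ)) * (f Astar - f A) ≤
      (Finset.univ \ A).sup' hne fun i => f (insert i A) - f A := by
  set M := (Finset.univ \ A).sup' hne fun i => f (insert i A) - f A with hM
  -- M ≥ 0
  obtain ⟨j, hj⟩ := hne
  have hM0 : 0 ≤ M := by
    have := Finset.le_sup' (fun i => f (insert i A) - f A) hj
    have h1 : 0 ≤ f (insert j A) - f A :=
      sub_nonneg.mpr (hmono A (insert j A) (Finset.subset_insert _ _))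
    linarith
  -- key lemma: for S disjoint from A, f(S ∪ A) - f A ≤ ∑_{i∈S} Δ(i|A)
  have key : ∀ S : Finset α, Disjoint S A →
      f (S ∪ A) - f A ≤ ∑ i ∈ S, (f (insert i A) - f A) := by
    intro S
    induction S using Finset.induction_on with
    | empty => simp
    | @insert x S hx ih =>
      intro hdisj
      have hdS : Disjoint S A := (Finset.disjoint_insert_left.mp hdisj).2
      have hxA : x ∉ A := (Finset.disjoint_insert_left.mp hdisj).1
      have hxSA : x ∉ S ∪ A := by simp [hx, hxA]
      have hsub' := hsub A (S ∪ A) x Finset.subset_union_right hxSA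
      have hins : insert x S ∪ A = insert x (S ∪ A) := by
        ext y; simp [or_assoc]
      rw [hins, Finset.sum_insert hx]
      have := ih hdS
      linarith
  have hdisj : Disjoint (Astar \ A) A := Finset.sdiff_disjoint
  have h1 : f Astar ≤ f ((Astar \ A) ∪ A) := by
    apply hmono
    intro y hy
    by_cases hyA : y ∈ A <;> simp [hy, hyA]
  have h2 := key (Astar \ A) hdisj
  -- each term ≤ M
  have h3 : ∑ i ∈ Astar \ A, (f (insert i A) - f A) ≤ (Astar \ A).card • M := by
    apply Finset.sum_le_card_nsmul
    intro i hi
    rw [hM]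
    refine Finset.le_sup' (fun i => f (insert i A) - f A) ?_
    simp only [Finset.mem_sdiff] at hi ⊢
    exact ⟨Finset.mem_univ _, hi.2⟩
  have hcard2 : ((Astar \ A).card : ℝ) ≤ (k : ℝ) := by
    exact_mod_cast le_trans (Finset.card_le_card (Finset.sdiff_subset)) hcard
  have h4 : ((Astar \ A).card : ℝ) * M ≤ (k : ℝ) * M :=
    mul_le_mul_of_nonneg_right hcard2 hM0
  rw [nsmul_eq_mul] at h3
  have hkpos : (0 : ℝ) < k := by exact_mod_cast hk
  rw [div_mul_eq_mul_div, one_mul, div_le_iff₀ hkpos]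
  have : (k : ℝ) * M = M * k := mul_comm _ _
  linarith
end
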